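/- arXiv:1909.04284 — 5 statements merged into one kernel-verified Lean document; each statement's English description precedes it below -/
import Mathlib

section
/- Let p ≥ 3 be a prime, let q, k ≥ 1 be natural numbers and θ ∈ ℚ_p with |q|_p < 1, |θ − 1|_p < 1, and |k|_p ≤ |q + θ − 1|_p. Then for every x ∈ ℚ_p with x ≠ 2 − q − θ, all iterates satisfy f^n(x) ≠ 2 − q − θ and f^n(x) → 1 as n → ∞; in particular x₀* = 1 is the unique fixed point of f on ℚ_p \ {2 − q − θ}. -/
/-!
Put `ε = q + θ - 1`. Then `f x = ((θ (x - 1) + ε) / (x - 1 + ε)) ^ k`, so `f 1 = 1` and the pole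
is `1 - ε`. Two estimates drive the dynamics.

For every `s`, `|s ^ k - 1|` is either `≥ 1` or `≤ |k| / p`: reducing mod `p`, where Frobenius is
trivial, `s ^ m ≡ 1` for the prime-to-`p` part `m` of `k`, and then `|(1 + t) ^ n - 1| ≤ |n| |t|`
for `|t| < 1`. As `|k| ≤ |ε| < 1`, this norm is never `|ε|`; thus `|f x - 1| ≠ |ε|` for every `x`,
and in particular `f` never hits the pole.

If `|z - 1| ≠ |ε|`, then `|z - 1 + ε| = max |z - 1| |ε|`, and the same binomial estimate gives
`|f z - 1| ≤ |k| |θ - 1| |z - 1| / |z - 1 + ε| ≤ |θ - 1| |z - 1|`. So `f` contracts towards `1` on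
its own range, which yields both the convergence and the uniqueness of the fixed point.
-/

/-- The Potts–Bethe mapping on `ℚ_[p]` (with total division, so defined everywhere). -/
noncomputable def pottsBethe (p : ℕ) [Fact p.Prime] (q k : ℕ) (θ : ℚ_[p]) : ℚ_[p] → ℚ_[p] :=
  fun x => ((θ * x + (q : ℚ_[p]) - 1) / (x + θ + (q : ℚ_[p]) - 2)) ^ k

open Filter Topology

namespace Padic

variable {p : ℕ} [hp : Fact p.Prime]

lemma norm_le_inv_of_norm_lt_one {x : ℚ_[p]} (hx : ‖x‖ < 1) : ‖x‖ ≤ (p : ℝ)⁻¹ := by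
  simpa using (norm_le_pow_iff_norm_lt_pow_add_one x (-1)).2 (by simpa using hx)

lemma inv_pow_le_norm_natCast_succ (j : ℕ) : (p : ℝ)⁻¹ ^ j ≤ ‖((j + 1 : ℕ) : ℚ_[p])‖ := by
  by_contra! h
  have hdvd : ((p ^ (j + 1) : ℕ) : ℤ) ∣ ((j + 1 : ℕ) : ℤ) := by
    push_cast
    rw [← norm_int_le_pow_iff_dvd, norm_le_pow_iff_norm_lt_pow_add_one]
    simpa [zpow_neg, zpow_natCast] using h
  have := Nat.le_of_dvd j.succ_pos (Int.natCast_dvd_natCast.1 hdvd)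
  exact (Nat.lt_pow_self hp.out.one_lt).not_ge this

lemma norm_choose_succ_mul_le (n j : ℕ) :
    ‖(n.choose (j + 1) : ℚ_[p])‖ * ‖((j + 1 : ℕ) : ℚ_[p])‖ ≤ ‖(n : ℚ_[p])‖ := by
  cases n with
  | zero => simp
  | succ n =>
    rw [← norm_mul, ← Nat.cast_mul, ← Nat.add_one_mul_choose_eq, Nat.cast_mul, norm_mul]
    exact mul_le_of_le_one_right (norm_nonneg _) (IsUltrametricDist.norm_natCast_le_one _ _)

lemma norm_one_add_pow_sub_one_le (n : ℕ) {t : ℚ_[p]} (ht : ‖t‖ ≤ (p : ℝ)⁻¹) :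
    ‖(1 + t) ^ n - 1‖ ≤ ‖(n : ℚ_[p])‖ * ‖t‖ := by
  have hexpand :
      (1 + t) ^ n - 1 = ∑ j ∈ Finset.range n, t ^ (j + 1) * (n.choose (j + 1) : ℚ_[p]) := by
    rw [add_comm, add_pow, Finset.sum_range_succ']
    simp
  rw [hexpand]
  refine IsUltrametricDist.norm_sum_le_of_forall_le_of_nonneg (by positivity) fun j _ => ?_
  have htj : ‖t‖ ^ j ≤ ‖((j + 1 : ℕ) : ℚ_[p])‖ :=
    (pow_le_pow_left₀ (norm_nonneg t) ht j).trans (inv_pow_le_norm_natCast_succ j)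
  calc ‖t ^ (j + 1) * (n.choose (j + 1) : ℚ_[p])‖
      = ‖t‖ ^ j * ‖(n.choose (j + 1) : ℚ_[p])‖ * ‖t‖ := by rw [norm_mul, norm_pow, pow_succ]; ring
    _ ≤ ‖((j + 1 : ℕ) : ℚ_[p])‖ * ‖(n.choose (j + 1) : ℚ_[p])‖ * ‖t‖ := by gcongr
    _ ≤ ‖(n : ℚ_[p])‖ * ‖t‖ := by
      gcongr
      rw [mul_comm]
      exact norm_choose_succ_mul_le n j

lemma norm_pow_sub_one_le_of_norm_lt_one {s : ℚ_[p]} {k : ℕ} (h : ‖s ^ k - 1‖ < 1) :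
    ‖s ^ k - 1‖ ≤ ‖(k : ℚ_[p])‖ * (p : ℝ)⁻¹ := by
  rcases eq_or_ne k 0 with rfl | hk
  · simp
  have hs : ‖s‖ = 1 := by
    have hsk : ‖s ^ k‖ = 1 := by
      simpa [max_eq_right h.le] using IsUltrametricDist.norm_add_eq_max_of_norm_ne_norm
        (x := s ^ k - 1) (y := 1) (by simpa using h.ne)
    rwa [norm_pow, pow_eq_one_iff_of_nonneg (norm_nonneg _) hk] at hsk
  let S : ℤ_[p] := ⟨s, hs.le⟩
  have residue (n : ℕ) : ‖s ^ n - 1‖ < 1 ↔ PadicInt.toZMod S ^ n = 1 := by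
    rw [← sub_eq_zero, ← map_pow, ← map_one PadicInt.toZMod, ← map_sub, ← RingHom.mem_ker,
      PadicInt.ker_toZMod, IsLocalRing.mem_maximalIdeal, PadicInt.mem_nonunits, PadicInt.norm_def]
    rfl
  obtain ⟨a, m, hpm, rfl⟩ := Nat.exists_eq_pow_mul_and_not_dvd hk p hp.out.ne_one
  -- Frobenius is the identity on `ZMod p`, so `u ^ (p ^ a * m) = u ^ m` for the residue `u` of `s`.
  have hm : ‖s ^ m - 1‖ ≤ (p : ℝ)⁻¹ := by
    refine norm_le_inv_of_norm_lt_one ((residue m).2 ?_)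
    rw [← (residue _).1 h, pow_mul, ZMod.pow_card_pow]
  have hm_norm : ‖(m : ℚ_[p])‖ = 1 :=
    norm_natCast_eq_one_iff.2 ((Nat.Prime.coprime_iff_not_dvd hp.out).2 hpm)
  calc ‖s ^ (p ^ a * m) - 1‖ = ‖(1 + (s ^ m - 1)) ^ p ^ a - 1‖ := by
        rw [add_sub_cancel, ← pow_mul, mul_comm]
    _ ≤ ‖((p ^ a : ℕ) : ℚ_[p])‖ * ‖s ^ m - 1‖ := norm_one_add_pow_sub_one_le _ hm
    _ ≤ ‖((p ^ a * m : ℕ) : ℚ_[p])‖ * (p : ℝ)⁻¹ := by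
        rw [Nat.cast_mul, norm_mul, hm_norm, mul_one]
        gcongr

end Padic

lemma tendsto_iterate_of_norm_sub_le_mul {E : Type*} [SeminormedAddCommGroup E] {g : E → E}
    {c : E} {r : ℝ} (hr0 : 0 ≤ r) (hr1 : r < 1) (hg : ∀ x, ‖g (g x) - c‖ ≤ r * ‖g x - c‖)
    (x : E) : Tendsto (fun n => g^[n] x) atTop (𝓝 c) := by
  have hbound (n : ℕ) : ‖g^[n + 1] x - c‖ ≤ r ^ n * ‖g x - c‖ := by
    induction n with
    | zero => simp
    | succ n ih =>
      calc ‖g^[n + 2] x - c‖ = ‖g (g (g^[n] x)) - c‖ := by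
            simp only [Function.iterate_succ_apply']
        _ ≤ r * ‖g^[n + 1] x - c‖ := by rw [Function.iterate_succ_apply']; exact hg _
        _ ≤ r * (r ^ n * ‖g x - c‖) := by gcongr
        _ = r ^ (n + 1) * ‖g x - c‖ := by ring
  rw [← tendsto_add_atTop_iff_nat 1, tendsto_iff_norm_sub_tendsto_zero]
  refine squeeze_zero (fun _ => norm_nonneg _) hbound ?_
  simpa using (tendsto_pow_atTop_nhds_zero_of_lt_one hr0 hr1).mul_const ‖g x - c‖

section PottsBethe

variable {p : ℕ} [Fact p.Prime] {q k : ℕ} {θ : ℚ_[p]}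

lemma pottsBethe_apply_eq (x : ℚ_[p]) :
    pottsBethe p q k θ x =
      ((θ * (x - 1) + (q + θ - 1)) / (x - 1 + (q + θ - 1))) ^ k := by
  unfold pottsBethe
  congr 2 <;> ring

lemma pottsBethe_one (hε : (q : ℚ_[p]) + θ - 1 ≠ 0) : pottsBethe p q k θ 1 = 1 := by
  simp [pottsBethe_apply_eq, hε]

lemma norm_pottsBethe_sub_one_ne (hk : k ≠ 0) (hkε : ‖(k : ℚ_[p])‖ ≤ ‖(q : ℚ_[p]) + θ - 1‖)
    (hε : ‖(q : ℚ_[p]) + θ - 1‖ < 1) (x : ℚ_[p]) :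
    ‖pottsBethe p q k θ x - 1‖ ≠ ‖(q : ℚ_[p]) + θ - 1‖ := by
  intro h
  have hk_pos : 0 < ‖(k : ℚ_[p])‖ := norm_pos_iff.2 (Nat.cast_ne_zero.2 hk)
  have hp_inv : (p : ℝ)⁻¹ < 1 := inv_lt_one_of_one_lt₀ (mod_cast (Fact.out : p.Prime).one_lt)
  rw [pottsBethe_apply_eq] at h
  have hle := Padic.norm_pow_sub_one_le_of_norm_lt_one (h ▸ hε)
  rw [h] at hle
  exact (hle.trans_lt (mul_lt_of_lt_one_right hk_pos hp_inv)).not_ge hkε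

lemma pottsBethe_ne_pole (hk : k ≠ 0) (hkε : ‖(k : ℚ_[p])‖ ≤ ‖(q : ℚ_[p]) + θ - 1‖)
    (hε : ‖(q : ℚ_[p]) + θ - 1‖ < 1) (x : ℚ_[p]) :
    pottsBethe p q k θ x ≠ 2 - q - θ := by
  intro h
  apply norm_pottsBethe_sub_one_ne hk hkε hε x
  rw [h, ← norm_neg]
  ring_nf

lemma norm_pottsBethe_sub_one_le (hθ : ‖θ - 1‖ < 1)
    (hkε : ‖(k : ℚ_[p])‖ ≤ ‖(q : ℚ_[p]) + θ - 1‖) {z : ℚ_[p]}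
    (hz : ‖z - 1‖ ≠ ‖(q : ℚ_[p]) + θ - 1‖) :
    ‖pottsBethe p q k θ z - 1‖ ≤ ‖θ - 1‖ * ‖z - 1‖ := by
  set d := z - 1 + (q + θ - 1) with hd_def
  have hd : ‖d‖ = max ‖z - 1‖ ‖(q : ℚ_[p]) + θ - 1‖ :=
    IsUltrametricDist.norm_add_eq_max_of_norm_ne_norm hz
  have hd_pos : 0 < ‖d‖ := by
    rw [hd, lt_max_iff]
    by_contra! h
    exact hz ((h.1.antisymm (norm_nonneg _)).trans (h.2.antisymm (norm_nonneg _)).symm)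
  set t := (θ - 1) * (z - 1) / d
  have hf : pottsBethe p q k θ z = (1 + t) ^ k := by
    have hd0 : d ≠ 0 := norm_pos_iff.1 hd_pos
    rw [pottsBethe_apply_eq, ← hd_def]
    congr 1
    simp only [t]
    field_simp
    rw [hd_def]
    ring
  have ht : ‖t‖ = ‖θ - 1‖ * (‖z - 1‖ / ‖d‖) := by simp only [t, norm_div, norm_mul, mul_div_assoc]
  have ht_le : ‖t‖ ≤ ‖θ - 1‖ := by
    rw [ht]
    exact mul_le_of_le_one_right (norm_nonneg _)
      (div_le_one_of_le₀ (hd ▸ le_max_left _ _) hd_pos.le)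
  calc ‖pottsBethe p q k θ z - 1‖ ≤ ‖(k : ℚ_[p])‖ * ‖t‖ := hf ▸
        Padic.norm_one_add_pow_sub_one_le k (ht_le.trans (Padic.norm_le_inv_of_norm_lt_one hθ))
    _ ≤ ‖d‖ * ‖t‖ := by gcongr; exact hkε.trans (hd ▸ le_max_right _ _)
    _ = ‖θ - 1‖ * ‖z - 1‖ := by rw [ht]; field_simp

end PottsBethe

theorem stmt0_general (p : ℕ) [Fact p.Prime] (q k : ℕ) (hk : 1 ≤ k)
    (θ : ℚ_[p]) (hqnorm : ‖(q : ℚ_[p])‖ < 1) (hθ : ‖θ - 1‖ < 1)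
    (hkq : ‖(k : ℚ_[p])‖ ≤ ‖(q : ℚ_[p]) + θ - 1‖) :
    (∀ x : ℚ_[p], x ≠ 2 - (q : ℚ_[p]) - θ →
      (∀ n : ℕ, (pottsBethe p q k θ)^[n] x ≠ 2 - (q : ℚ_[p]) - θ) ∧
      Filter.Tendsto (fun n => (pottsBethe p q k θ)^[n] x) Filter.atTop (nhds 1)) ∧
    pottsBethe p q k θ 1 = 1 ∧
    (∀ x : ℚ_[p], x ≠ 2 - (q : ℚ_[p]) - θ → pottsBethe p q k θ x = x → x = 1) := by
  have hk0 : k ≠ 0 := Nat.one_le_iff_ne_zero.1 hk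
  have hε : ‖(q : ℚ_[p]) + θ - 1‖ < 1 := by
    rw [add_sub_assoc]
    exact (IsUltrametricDist.norm_add_le_max _ _).trans_lt (max_lt hqnorm hθ)
  have hcontract (x : ℚ_[p]) :
      ‖pottsBethe p q k θ (pottsBethe p q k θ x) - 1‖ ≤ ‖θ - 1‖ * ‖pottsBethe p q k θ x - 1‖ :=
    norm_pottsBethe_sub_one_le hθ hkq (norm_pottsBethe_sub_one_ne hk0 hkq hε x)
  refine ⟨fun x hx => ⟨?_, tendsto_iterate_of_norm_sub_le_mul (norm_nonneg _) hθ hcontract x⟩,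
    pottsBethe_one ?_, fun x _ hfx => ?_⟩
  · rintro (_ | n)
    · exact hx
    · rw [Function.iterate_succ_apply']
      exact pottsBethe_ne_pole hk0 hkq hε _
  · exact norm_pos_iff.1 ((norm_pos_iff.2 (Nat.cast_ne_zero.2 hk0)).trans_le hkq)
  · have hx := hcontract x
    rw [hfx, hfx] at hx
    have : ‖x - 1‖ = 0 := by nlinarith [norm_nonneg (x - 1)]
    exact sub_eq_zero.1 (norm_eq_zero.1 this)

theorem stmt0 (p : ℕ) [Fact p.Prime] (hp : 3 ≤ p) (q k : ℕ) (hq : 1 ≤ q) (hk : 1 ≤ k)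
    (θ : ℚ_[p]) (hqnorm : ‖(q : ℚ_[p])‖ < 1) (hθ : ‖θ - 1‖ < 1)
    (hkq : ‖(k : ℚ_[p])‖ ≤ ‖(q : ℚ_[p]) + θ - 1‖) :
    (∀ x : ℚ_[p], x ≠ 2 - (q : ℚ_[p]) - θ →
      (∀ n : ℕ, (pottsBethe p q k θ)^[n] x ≠ 2 - (q : ℚ_[p]) - θ) ∧
      Filter.Tendsto (fun n => (pottsBethe p q k θ)^[n] x) Filter.atTop (nhds 1)) ∧
    pottsBethe p q k θ 1 = 1 ∧
    (∀ x : ℚ_[p], x ≠ 2 - (q : ℚ_[p]) - θ → pottsBethe p q k θ x = x → x = 1) :=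
  stmt0_general p q k hk θ hqnorm hθ hkq
end

section
/- Let p ≥ 3 be a prime, let q, k ≥ 1 be natural numbers and θ ∈ ℚ_p with |q|_p < 1, |θ − 1|_p < 1, and |k|_p ≤ |q + θ − 1|_p. Then for every x ∈ ℚ_p with x ≠ 2 − q − θ one has |f(x) − (2 − q − θ)|_p ≥ |q + θ − 1|_p; consequently the pole x^∞ = 2 − q − θ has no preimages under f, i.e. the set ⋃_{n≥1} f^{−n}({x^∞}) is empty. -/
namespace PadicInt

variable {p : ℕ} [Fact p.Prime]

lemma norm_lt_one_iff_toZMod_eq_zero (x : ℤ_[p]) : ‖x‖ < 1 ↔ toZMod x = 0 := by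
  rw [← RingHom.mem_ker, ker_toZMod, IsLocalRing.mem_maximalIdeal, mem_nonunits]

lemma norm_le_norm_of_dvd {x y : ℤ_[p]} (h : x ∣ y) : ‖y‖ ≤ ‖x‖ := by
  obtain ⟨c, rfl⟩ := h
  rw [norm_mul]
  exact mul_le_of_le_one_right (norm_nonneg x) (norm_le_one c)

lemma norm_pow_sub_one_le_norm_sub_one (u : ℤ_[p]) (n : ℕ) : ‖u ^ n - 1‖ ≤ ‖u - 1‖ :=
  norm_le_norm_of_dvd (sub_one_dvd_pow_sub_one u n)

lemma norm_pow_prime_sub_one_le {u : ℤ_[p]} (hu : ‖u - 1‖ < 1) :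
    ‖u ^ p - 1‖ ≤ ‖(p : ℤ_[p])‖ * ‖u - 1‖ := by
  have hu1 : toZMod u = 1 := by
    rw [norm_lt_one_iff_toZMod_eq_zero, map_sub, map_one, sub_eq_zero] at hu
    exact hu
  -- The geometric sum `∑ u ^ i` reduces to `p = 0` modulo `p`.
  have hsum : (p : ℤ_[p]) ∣ ∑ i ∈ Finset.range p, u ^ i := by
    rw [← norm_lt_one_iff_dvd, norm_lt_one_iff_toZMod_eq_zero]
    simp [hu1]
  rw [← mul_geom_sum, norm_mul, mul_comm]
  exact mul_le_mul_of_nonneg_right (norm_le_norm_of_dvd hsum) (norm_nonneg _)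

lemma norm_pow_sub_one_le {u : ℤ_[p]} (hu : ‖u - 1‖ < 1) (n : ℕ) :
    ‖u ^ n - 1‖ ≤ ‖(n : ℤ_[p])‖ * ‖u - 1‖ := by
  induction n using Nat.recOnMul generalizing u with
  | zero => simp
  | one => simp
  | prime ℓ hℓ =>
    by_cases hℓp : ℓ = p
    · subst hℓp
      exact norm_pow_prime_sub_one_le hu
    · have hcop : p.Coprime ℓ :=
        (Nat.coprime_primes Fact.out hℓ).2 (Ne.symm hℓp)
      rw [norm_natCast_eq_one_iff.2 hcop, one_mul]
      exact norm_pow_sub_one_le_norm_sub_one u ℓ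
  | mul a b iha ihb =>
    have hua : ‖u ^ a - 1‖ < 1 := (norm_pow_sub_one_le_norm_sub_one u a).trans_lt hu
    calc ‖u ^ (a * b) - 1‖ = ‖(u ^ a) ^ b - 1‖ := by rw [pow_mul]
      _ ≤ ‖(b : ℤ_[p])‖ * ‖u ^ a - 1‖ := ihb hua
      _ ≤ ‖(b : ℤ_[p])‖ * (‖(a : ℤ_[p])‖ * ‖u - 1‖) :=
        mul_le_mul_of_nonneg_left (iha hu) (norm_nonneg _)
      _ = ‖((a * b : ℕ) : ℤ_[p])‖ * ‖u - 1‖ := by rw [Nat.cast_mul, norm_mul]; ring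

lemma norm_pow_prime_pow_sub_one_lt_one_iff (u : ℤ_[p]) (e : ℕ) :
    ‖u ^ p ^ e - 1‖ < 1 ↔ ‖u - 1‖ < 1 := by
  simp only [norm_lt_one_iff_toZMod_eq_zero, map_sub, map_pow, map_one, ZMod.pow_card_pow]

lemma norm_pow_sub_one_lt_norm_natCast {u : ℤ_[p]} {k : ℕ} (hk : k ≠ 0)
    (h : ‖u ^ k - 1‖ < 1) : ‖u ^ k - 1‖ < ‖(k : ℤ_[p])‖ := by
  obtain ⟨e, m, hpm, rfl⟩ := Nat.exists_eq_pow_mul_and_not_dvd hk p (Fact.out : p.Prime).ne_one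
  have hm : ‖(m : ℤ_[p])‖ = 1 :=
    norm_natCast_eq_one_iff.2 ((Nat.Prime.coprime_iff_not_dvd Fact.out).2 hpm)
  rw [pow_mul'] at h ⊢
  have hC : ‖u ^ m - 1‖ < 1 := (norm_pow_prime_pow_sub_one_lt_one_iff _ e).1 h
  have hpe : 0 < ‖((p ^ e : ℕ) : ℤ_[p])‖ :=
    norm_pos_iff.2 (Nat.cast_ne_zero.2 (pow_ne_zero e (Fact.out : p.Prime).ne_zero))
  calc ‖(u ^ m) ^ p ^ e - 1‖ ≤ ‖((p ^ e : ℕ) : ℤ_[p])‖ * ‖u ^ m - 1‖ := norm_pow_sub_one_le hC _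
    _ < ‖((p ^ e : ℕ) : ℤ_[p])‖ * 1 := mul_lt_mul_of_pos_left hC hpe
    _ = ‖((p ^ e * m : ℕ) : ℤ_[p])‖ := by rw [Nat.cast_mul, norm_mul, hm]

end PadicInt

namespace Padic

variable {p : ℕ} [Fact p.Prime]

lemma norm_pow_sub_one_lt_natCast_or_one_le {k : ℕ} (hk : k ≠ 0) (A : ℚ_[p]) :
    ‖A ^ k - 1‖ < ‖(k : ℚ_[p])‖ ∨ 1 ≤ ‖A ^ k - 1‖ := by
  refine (lt_or_ge _ 1).imp (fun h => ?_) id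
  have hAk : ‖A ^ k‖ = 1 := by
    rw [← sub_add_cancel (A ^ k) 1,
      IsUltrametricDist.norm_add_eq_max_of_norm_ne_norm (by simpa using h.ne), norm_one,
      max_eq_right h.le]
  have hA : ‖A‖ ≤ 1 := ((pow_eq_one_iff_of_nonneg (norm_nonneg A) hk).1 (by rwa [← norm_pow])).le
  obtain ⟨u, rfl⟩ : ∃ u : ℤ_[p], (u : ℚ_[p]) = A := ⟨⟨A, hA⟩, rfl⟩
  have key := PadicInt.norm_pow_sub_one_lt_norm_natCast hk (u := u)
  simp only [PadicInt.norm_def, PadicInt.coe_sub, PadicInt.coe_pow, PadicInt.coe_one,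
    PadicInt.coe_natCast] at key
  exact key h

lemma norm_le_norm_pow_sub_one_add {k : ℕ} (hk : k ≠ 0) {ε : ℚ_[p]}
    (hkε : ‖(k : ℚ_[p])‖ ≤ ‖ε‖) (hε : ‖ε‖ < 1) (A : ℚ_[p]) : ‖ε‖ ≤ ‖A ^ k - 1 + ε‖ := by
  have hne : ‖A ^ k - 1‖ ≠ ‖ε‖ := by
    rcases norm_pow_sub_one_lt_natCast_or_one_le hk A with h | h
    · exact (h.trans_le hkε).ne
    · exact (hε.trans_le h).ne'
  rw [IsUltrametricDist.norm_add_eq_max_of_norm_ne_norm hne]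
  exact le_max_right _ _

end Padic

lemma pottsBethe_sub_pole (p : ℕ) [Fact p.Prime] (q k : ℕ) (θ x : ℚ_[p]) :
    pottsBethe p q k θ x - (2 - (q : ℚ_[p]) - θ) =
      ((θ * x + (q : ℚ_[p]) - 1) / (x + θ + (q : ℚ_[p]) - 2)) ^ k - 1 + ((q : ℚ_[p]) + θ - 1) := by
  unfold pottsBethe
  ring

theorem stmt1_general (p : ℕ) [Fact p.Prime] (q k : ℕ) (hk : 1 ≤ k)
    (θ : ℚ_[p]) (hqnorm : ‖(q : ℚ_[p])‖ < 1) (hθ : ‖θ - 1‖ < 1)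
    (hkq : ‖(k : ℚ_[p])‖ ≤ ‖(q : ℚ_[p]) + θ - 1‖) :
    (∀ x : ℚ_[p], x ≠ 2 - (q : ℚ_[p]) - θ →
      ‖pottsBethe p q k θ x - (2 - (q : ℚ_[p]) - θ)‖ ≥ ‖(q : ℚ_[p]) + θ - 1‖) ∧
    (∀ x : ℚ_[p], x ≠ 2 - (q : ℚ_[p]) - θ →
      ∀ n : ℕ, 1 ≤ n → (pottsBethe p q k θ)^[n] x ≠ 2 - (q : ℚ_[p]) - θ) := by
  have hk0 : k ≠ 0 := by omega
  have hε : ‖(q : ℚ_[p]) + θ - 1‖ < 1 := by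
    rw [add_sub_assoc]
    exact (IsUltrametricDist.norm_add_le_max _ _).trans_lt (max_lt hqnorm hθ)
  have hε0 : 0 < ‖(q : ℚ_[p]) + θ - 1‖ :=
    (norm_pos_iff.2 (Nat.cast_ne_zero.2 hk0)).trans_le hkq
  have hbound (x : ℚ_[p]) :
      ‖(q : ℚ_[p]) + θ - 1‖ ≤ ‖pottsBethe p q k θ x - (2 - (q : ℚ_[p]) - θ)‖ := by
    rw [pottsBethe_sub_pole]
    exact Padic.norm_le_norm_pow_sub_one_add hk0 hkq hε _
  refine ⟨fun x _ => hbound x, fun x _ n hn hpole => ?_⟩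
  obtain ⟨m, rfl⟩ := Nat.exists_eq_add_of_le' hn
  have := hbound ((pottsBethe p q k θ)^[m] x)
  rw [← Function.iterate_succ_apply' (pottsBethe p q k θ), hpole, sub_self, norm_zero] at this
  linarith

theorem stmt1 (p : ℕ) [Fact p.Prime] (hp : 3 ≤ p) (q k : ℕ) (hq : 1 ≤ q) (hk : 1 ≤ k)
    (θ : ℚ_[p]) (hqnorm : ‖(q : ℚ_[p])‖ < 1) (hθ : ‖θ - 1‖ < 1)
    (hkq : ‖(k : ℚ_[p])‖ ≤ ‖(q : ℚ_[p]) + θ - 1‖) :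
    (∀ x : ℚ_[p], x ≠ 2 - (q : ℚ_[p]) - θ →
      ‖pottsBethe p q k θ x - (2 - (q : ℚ_[p]) - θ)‖ ≥ ‖(q : ℚ_[p]) + θ - 1‖) ∧
    (∀ x : ℚ_[p], x ≠ 2 - (q : ℚ_[p]) - θ →
      ∀ n : ℕ, 1 ≤ n → (pottsBethe p q k θ)^[n] x ≠ 2 - (q : ℚ_[p]) - θ) :=
  stmt1_general p q k hk θ hqnorm hθ hkq
end

section
/- Let p ≥ 3 be a prime, let q, k ≥ 1 be natural numbers and θ ∈ ℚ_p with |θ − 1|_p < |q|_p < |k|_p. If x ∈ ℚ_p satisfies |x − (2 − q − θ)|_p > |θ − 1|_p, then all iterates satisfy f^n(x) ≠ 2 − q − θ and f^n(x) → 1 as n → ∞. -/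
/-!
Write `x∞ = 2 - q - θ` and `r(x) = (θx + q - 1)/(x - x∞)`, so that `f = r ^ k` and
`(r(x) - 1)(x - x∞) = (θ - 1)(x - 1)`. Off the ball `|x - x∞| ≤ |θ - 1|` the ultrametric
inequality turns this identity into `|r(x) - 1| < |q| ≤ 1`, hence `|f(x) - 1| ≤ |r(x) - 1| < |q|`
and `|f(x) - x∞| = |(f(x) - 1) + (θ - 1 + q)| = |q|`. So the orbit never re-enters that ball and,
from the first step on, lies on the sphere `|y - x∞| = |q|`, where `f` contracts towards `1` by
the factor `|θ - 1| / |q| < 1`.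
-/

open Filter Topology IsUltrametricDist

theorem IsUltrametricDist.norm_pow_sub_one_le {K : Type*} [NormedDivisionRing K]
    [IsUltrametricDist K] {g : K} (hg : ‖g‖ ≤ 1) (k : ℕ) : ‖g ^ k - 1‖ ≤ ‖g - 1‖ := by
  have hsum : ‖∑ i ∈ Finset.range k, g ^ i‖ ≤ 1 :=
    norm_sum_le_of_forall_le_of_nonneg zero_le_one fun i _ => by
      rw [norm_pow]
      exact pow_le_one₀ (norm_nonneg g) hg
  calc ‖g ^ k - 1‖ = ‖∑ i ∈ Finset.range k, g ^ i‖ * ‖g - 1‖ := by rw [← geom_sum_mul, norm_mul]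
    _ ≤ ‖g - 1‖ := mul_le_of_le_one_left (norm_nonneg _) hsum

theorem IsUltrametricDist.norm_mul_norm_sub_add_lt {E : Type*} [SeminormedAddCommGroup E]
    [IsUltrametricDist E] {t s d : E} (hts : ‖t‖ < ‖s‖) (htd : ‖t‖ < ‖d‖) :
    ‖t‖ * ‖d - (t + s)‖ < ‖s‖ * ‖d‖ := by
  have hts' : ‖t + s‖ = ‖s‖ := by
    rw [norm_add_eq_max_of_norm_ne_norm hts.ne, max_eq_right hts.le]
  have hle : ‖d - (t + s)‖ ≤ max ‖d‖ ‖s‖ := by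
    simpa only [sub_eq_add_neg, norm_neg, hts'] using norm_add_le_max d (-(t + s))
  have hs : 0 < ‖s‖ := (norm_nonneg t).trans_lt hts
  have hd : 0 < ‖d‖ := (norm_nonneg t).trans_lt htd
  calc ‖t‖ * ‖d - (t + s)‖ ≤ max (‖t‖ * ‖d‖) (‖t‖ * ‖s‖) := by
        rw [← mul_max_of_nonneg _ _ (norm_nonneg t)]
        exact mul_le_mul_of_nonneg_left hle (norm_nonneg t)
    _ < ‖s‖ * ‖d‖ := by
        refine max_lt (mul_lt_mul_of_pos_right hts hd) ?_
        rw [mul_comm ‖s‖]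
        exact mul_lt_mul_of_pos_right htd hs

theorem tendsto_of_norm_sub_le_mul {E : Type*} [SeminormedAddCommGroup E] {y : ℕ → E} {a : E}
    {c : ℝ} (hc0 : 0 ≤ c) (hc1 : c < 1) (hy : ∀ n, ‖y (n + 1) - a‖ ≤ c * ‖y n - a‖) :
    Tendsto y atTop (𝓝 a) := by
  have hgeom : ∀ n, ‖y n - a‖ ≤ c ^ n * ‖y 0 - a‖ := by
    intro n
    induction n with
    | zero => simp
    | succ n ih =>
      calc ‖y (n + 1) - a‖ ≤ c * (c ^ n * ‖y 0 - a‖) := (hy n).trans (by gcongr)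
        _ = c ^ (n + 1) * ‖y 0 - a‖ := by ring
  rw [tendsto_iff_norm_sub_tendsto_zero]
  refine squeeze_zero (fun n => norm_nonneg _) hgeom ?_
  simpa using (tendsto_pow_atTop_nhds_zero_of_lt_one hc0 hc1).mul_const ‖y 0 - a‖

noncomputable def pottsBetheRatio (p : ℕ) [Fact p.Prime] (q : ℕ) (θ : ℚ_[p]) (x : ℚ_[p]) :
    ℚ_[p] :=
  (θ * x + (q : ℚ_[p]) - 1) / (x + θ + (q : ℚ_[p]) - 2)

section PottsBethe

variable {p : ℕ} [Fact p.Prime] {q k : ℕ} {θ x : ℚ_[p]}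

theorem pottsBethe_eq_pottsBetheRatio_pow :
    pottsBethe p q k θ x = pottsBetheRatio p q θ x ^ k := rfl

theorem pottsBetheRatio_sub_one_mul (hx : x - (2 - q - θ) ≠ 0) :
    (pottsBetheRatio p q θ x - 1) * (x - (2 - q - θ)) = (θ - 1) * (x - 1) := by
  have hden : x + θ + (q : ℚ_[p]) - 2 = x - (2 - q - θ) := by ring
  rw [pottsBetheRatio, hden, sub_mul, div_mul_cancel₀ _ hx]
  ring

theorem norm_pottsBetheRatio_sub_one_lt (hθq : ‖θ - 1‖ < ‖(q : ℚ_[p])‖)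
    (hx : ‖θ - 1‖ < ‖x - (2 - q - θ)‖) : ‖pottsBetheRatio p q θ x - 1‖ < ‖(q : ℚ_[p])‖ := by
  have hd : 0 < ‖x - (2 - q - θ)‖ := (norm_nonneg _).trans_lt hx
  refine lt_of_mul_lt_mul_right ?_ hd.le
  calc ‖pottsBetheRatio p q θ x - 1‖ * ‖x - (2 - q - θ)‖ = ‖θ - 1‖ * ‖x - 1‖ := by
        rw [← norm_mul, pottsBetheRatio_sub_one_mul (norm_pos_iff.mp hd), norm_mul]
    _ = ‖θ - 1‖ * ‖x - (2 - q - θ) - ((θ - 1) + q)‖ := by ring_nf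
    _ < ‖(q : ℚ_[p])‖ * ‖x - (2 - q - θ)‖ := norm_mul_norm_sub_add_lt hθq hx

theorem norm_pottsBethe_sub_one_le_s5 (hθq : ‖θ - 1‖ < ‖(q : ℚ_[p])‖)
    (hx : ‖θ - 1‖ < ‖x - (2 - q - θ)‖) :
    ‖pottsBethe p q k θ x - 1‖ ≤ ‖pottsBetheRatio p q θ x - 1‖ := by
  have hr := (norm_pottsBetheRatio_sub_one_lt hθq hx).trans_le (norm_natCast_le_one ℚ_[p] q)
  have hr1 : ‖pottsBetheRatio p q θ x‖ ≤ 1 := by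
    simpa using (norm_add_one_le_max_norm_one (pottsBetheRatio p q θ x - 1)).trans
      (max_le hr.le le_rfl)
  rw [pottsBethe_eq_pottsBetheRatio_pow]
  exact norm_pow_sub_one_le hr1 k

theorem norm_pottsBethe_sub_pole (hθq : ‖θ - 1‖ < ‖(q : ℚ_[p])‖)
    (hx : ‖θ - 1‖ < ‖x - (2 - q - θ)‖) :
    ‖pottsBethe p q k θ x - (2 - q - θ)‖ = ‖(q : ℚ_[p])‖ := by
  have hsmall : ‖pottsBethe p q k θ x - 1‖ < ‖(q : ℚ_[p])‖ :=
    (norm_pottsBethe_sub_one_le_s5 hθq hx).trans_lt (norm_pottsBetheRatio_sub_one_lt hθq hx)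
  have hθq' : ‖(θ - 1) + q‖ = ‖(q : ℚ_[p])‖ := by
    rw [norm_add_eq_max_of_norm_ne_norm hθq.ne, max_eq_right hθq.le]
  rw [show pottsBethe p q k θ x - (2 - q - θ) = (pottsBethe p q k θ x - 1) + ((θ - 1) + q) by ring,
    norm_add_eq_max_of_norm_ne_norm (hθq'.symm ▸ hsmall.ne), hθq', max_eq_right hsmall.le]

theorem norm_pottsBethe_sub_one_le_mul (hθq : ‖θ - 1‖ < ‖(q : ℚ_[p])‖)
    (hx : ‖x - (2 - q - θ)‖ = ‖(q : ℚ_[p])‖) :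
    ‖pottsBethe p q k θ x - 1‖ ≤ ‖θ - 1‖ / ‖(q : ℚ_[p])‖ * ‖x - 1‖ := by
  have hq : 0 < ‖(q : ℚ_[p])‖ := (norm_nonneg _).trans_lt hθq
  have hx' : ‖θ - 1‖ < ‖x - (2 - q - θ)‖ := hx ▸ hθq
  rw [div_mul_eq_mul_div, le_div_iff₀ hq]
  calc ‖pottsBethe p q k θ x - 1‖ * ‖(q : ℚ_[p])‖
      ≤ ‖pottsBetheRatio p q θ x - 1‖ * ‖x - (2 - q - θ)‖ := by
        rw [hx]
        exact mul_le_mul_of_nonneg_right (norm_pottsBethe_sub_one_le_s5 hθq hx') hq.le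
    _ = ‖θ - 1‖ * ‖x - 1‖ := by
        rw [← norm_mul, pottsBetheRatio_sub_one_mul (norm_pos_iff.mp (hq.trans_eq hx.symm)),
          norm_mul]

end PottsBethe

theorem stmt5_general (p : ℕ) [Fact p.Prime] (q k : ℕ)
    (θ : ℚ_[p]) (hθq : ‖θ - 1‖ < ‖(q : ℚ_[p])‖)
    (x : ℚ_[p]) (hx : ‖x - (2 - (q : ℚ_[p]) - θ)‖ > ‖θ - 1‖) :
    (∀ n : ℕ, (pottsBethe p q k θ)^[n] x ≠ 2 - (q : ℚ_[p]) - θ) ∧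
    Filter.Tendsto (fun n => (pottsBethe p q k θ)^[n] x) Filter.atTop (nhds 1) := by
  set f := pottsBethe p q k θ
  let S : Set ℚ_[p] := {y | ‖θ - 1‖ < ‖y - (2 - q - θ)‖}
  have hmaps : Set.MapsTo f S S := fun y hy => by
    change ‖θ - 1‖ < ‖pottsBethe p q k θ y - (2 - q - θ)‖
    rw [norm_pottsBethe_sub_pole hθq hy]
    exact hθq
  have horbit : ∀ n, f^[n] x ∈ S := fun n => hmaps.iterate n hx
  have hsphere : ∀ n, ‖f^[n + 1] x - (2 - q - θ)‖ = ‖(q : ℚ_[p])‖ := fun n => by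
    rw [Function.iterate_succ_apply']
    exact norm_pottsBethe_sub_pole hθq (horbit n)
  refine ⟨fun n hn => ?_, ?_⟩
  · have h := horbit n
    simp only [S, Set.mem_ofPred_eq, hn, sub_self, norm_zero] at h
    exact (norm_nonneg _).not_gt h
  · have hq : 0 < ‖(q : ℚ_[p])‖ := (norm_nonneg _).trans_lt hθq
    rw [← tendsto_add_atTop_iff_nat 1]
    refine tendsto_of_norm_sub_le_mul (div_nonneg (norm_nonneg _) hq.le) ((div_lt_one hq).2 hθq)
      fun n => ?_
    rw [Function.iterate_succ_apply' f (n + 1)]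
    exact norm_pottsBethe_sub_one_le_mul hθq (hsphere n)

theorem stmt5 (p : ℕ) [Fact p.Prime] (hp : 3 ≤ p) (q k : ℕ) (hq : 1 ≤ q) (hk : 1 ≤ k)
    (θ : ℚ_[p]) (hθq : ‖θ - 1‖ < ‖(q : ℚ_[p])‖) (hqk : ‖(q : ℚ_[p])‖ < ‖(k : ℚ_[p])‖)
    (x : ℚ_[p]) (hx : ‖x - (2 - (q : ℚ_[p]) - θ)‖ > ‖θ - 1‖) :
    (∀ n : ℕ, (pottsBethe p q k θ)^[n] x ≠ 2 - (q : ℚ_[p]) - θ) ∧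
    Filter.Tendsto (fun n => (pottsBethe p q k θ)^[n] x) Filter.atTop (nhds 1) :=
  stmt5_general p q k θ hθq x hx
end

section
/- Let p ≥ 3 be a prime, let q, k ≥ 1 be natural numbers and θ ∈ ℚ_p with |θ − 1|_p < |q|_p < |k|_p. If x ∈ ℚ_p satisfies |x − 1 + q|_p ≥ |q|_p, then all iterates satisfy f^n(x) ≠ 2 − q − θ and f^n(x) → 1 as n → ∞. -/
open Set Filter Topology

theorem IsUltrametricDist.norm_add_eq_left_of_norm_lt {E : Type*} [SeminormedAddGroup E]
    [IsUltrametricDist E] {a b : E} (h : ‖b‖ < ‖a‖) : ‖a + b‖ = ‖a‖ := by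
  rw [norm_add_eq_max_of_norm_ne_norm h.ne', max_eq_left h.le]

theorem IsUltrametricDist.norm_one_add_pow_sub_one_le {R : Type*} [SeminormedRing R]
    [NormOneClass R] [IsUltrametricDist R] {t : R} (ht : ‖t‖ ≤ 1) (k : ℕ) :
    ‖(1 + t) ^ k - 1‖ ≤ ‖t‖ := by
  have h1t : ‖1 + t‖ ≤ 1 := by
    simpa [add_comm, ht] using norm_add_one_le_max_norm_one t
  have hgeom : ‖∑ i ∈ Finset.range k, (1 + t) ^ i‖ ≤ 1 :=
    norm_sum_le_of_forall_le_of_nonneg zero_le_one fun i _ =>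
      (_root_.norm_pow_le _ i).trans (pow_le_one₀ (norm_nonneg _) h1t)
  rw [← geom_sum_mul, add_sub_cancel_left]
  exact (norm_mul_le _ _).trans (mul_le_of_le_one_left (norm_nonneg _) hgeom)

namespace PottsBethe

variable {p : ℕ} [Fact p.Prime] {q : ℕ} {θ : ℚ_[p]}

def basin (p : ℕ) [Fact p.Prime] (q : ℕ) : Set ℚ_[p] :=
  {x | ‖(q : ℚ_[p])‖ ≤ ‖x - 1 + q‖}

theorem mem_basin {x : ℚ_[p]} : x ∈ basin p q ↔ ‖(q : ℚ_[p])‖ ≤ ‖x - 1 + q‖ := Iff.rfl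

theorem pottsBethe_eq_one_add_pow (k : ℕ) {x : ℚ_[p]} (hD : x + θ + q - 2 ≠ 0) :
    pottsBethe p q k θ x = (1 + (θ - 1) * (x - 1) / (x + θ + q - 2)) ^ k := by
  unfold pottsBethe
  congr 1
  field_simp
  ring

theorem norm_sub_one_le_of_mem_basin {x : ℚ_[p]} (hx : x ∈ basin p q) :
    ‖x - 1‖ ≤ ‖x - 1 + q‖ :=
  calc ‖x - 1‖ = ‖(x - 1 + q) + -q‖ := by rw [add_neg_cancel_right]
    _ ≤ max ‖x - 1 + q‖ ‖-(q : ℚ_[p])‖ := IsUltrametricDist.norm_add_le_max _ _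
    _ = ‖x - 1 + q‖ := by rw [norm_neg, max_eq_left hx]

theorem norm_sub_one_add_pos_of_mem_basin (hθq : ‖θ - 1‖ < ‖(q : ℚ_[p])‖) {x : ℚ_[p]}
    (hx : x ∈ basin p q) : 0 < ‖x - 1 + q‖ :=
  (norm_nonneg _).trans_lt hθq |>.trans_le hx

theorem norm_sub_one_div_le_one_of_mem_basin (hθq : ‖θ - 1‖ < ‖(q : ℚ_[p])‖) {x : ℚ_[p]}
    (hx : x ∈ basin p q) : ‖x - 1‖ / ‖x - 1 + q‖ ≤ 1 :=
  (div_le_one (norm_sub_one_add_pos_of_mem_basin hθq hx)).mpr (norm_sub_one_le_of_mem_basin hx)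

theorem norm_pottsBethe_sub_one_le (k : ℕ) (hθq : ‖θ - 1‖ < ‖(q : ℚ_[p])‖) {x : ℚ_[p]}
    (hx : x ∈ basin p q) :
    ‖pottsBethe p q k θ x - 1‖ ≤ ‖θ - 1‖ * (‖x - 1‖ / ‖x - 1 + q‖) := by
  have hpos := norm_sub_one_add_pos_of_mem_basin hθq hx
  have hD : ‖x + θ + q - 2‖ = ‖x - 1 + q‖ := by
    rw [show x + θ + q - 2 = (x - 1 + q) + (θ - 1) by ring]
    exact IsUltrametricDist.norm_add_eq_left_of_norm_lt (hθq.trans_le hx)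
  have ht : ‖(θ - 1) * (x - 1) / (x + θ + q - 2)‖ = ‖θ - 1‖ * (‖x - 1‖ / ‖x - 1 + q‖) := by
    rw [norm_div, norm_mul, hD, mul_div_assoc]
  have hq1 : ‖(q : ℚ_[p])‖ ≤ 1 := IsUltrametricDist.norm_natCast_le_one ℚ_[p] q
  rw [pottsBethe_eq_one_add_pow k (norm_pos_iff.mp (hD ▸ hpos)), ← ht]
  refine IsUltrametricDist.norm_one_add_pow_sub_one_le ?_ k
  rw [ht]
  exact mul_le_one₀ (hθq.le.trans hq1) (by positivity)
    (norm_sub_one_div_le_one_of_mem_basin hθq hx)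

theorem mapsTo_pottsBethe_basin (k : ℕ) (hθq : ‖θ - 1‖ < ‖(q : ℚ_[p])‖) :
    MapsTo (pottsBethe p q k θ) (basin p q) (basin p q) := by
  intro x hx
  have hsmall : ‖pottsBethe p q k θ x - 1‖ < ‖(q : ℚ_[p])‖ := by
    refine (norm_pottsBethe_sub_one_le k hθq hx).trans_lt (lt_of_le_of_lt ?_ hθq)
    exact mul_le_of_le_one_right (norm_nonneg _) (norm_sub_one_div_le_one_of_mem_basin hθq hx)
  rw [mem_basin, add_comm, IsUltrametricDist.norm_add_eq_left_of_norm_lt hsmall]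

theorem norm_pottsBethe_sub_one_le_mul (k : ℕ) (hθq : ‖θ - 1‖ < ‖(q : ℚ_[p])‖) {x : ℚ_[p]}
    (hx : x ∈ basin p q) :
    ‖pottsBethe p q k θ x - 1‖ ≤ ‖θ - 1‖ / ‖(q : ℚ_[p])‖ * ‖x - 1‖ := by
  have hq : 0 < ‖(q : ℚ_[p])‖ := (norm_nonneg _).trans_lt hθq
  calc ‖pottsBethe p q k θ x - 1‖ ≤ ‖θ - 1‖ * (‖x - 1‖ / ‖x - 1 + q‖) :=
        norm_pottsBethe_sub_one_le k hθq hx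
    _ ≤ ‖θ - 1‖ * (‖x - 1‖ / ‖(q : ℚ_[p])‖) := by gcongr; exact hx
    _ = ‖θ - 1‖ / ‖(q : ℚ_[p])‖ * ‖x - 1‖ := by ring

theorem norm_iterate_pottsBethe_sub_one_le (k : ℕ) (hθq : ‖θ - 1‖ < ‖(q : ℚ_[p])‖)
    {x : ℚ_[p]} (hx : x ∈ basin p q) (n : ℕ) :
    ‖(pottsBethe p q k θ)^[n] x - 1‖ ≤ (‖θ - 1‖ / ‖(q : ℚ_[p])‖) ^ n * ‖x - 1‖ := by
  induction n with
  | zero => simp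
  | succ n ih =>
    rw [Function.iterate_succ_apply', pow_succ', mul_assoc]
    refine (norm_pottsBethe_sub_one_le_mul k hθq
      ((mapsTo_pottsBethe_basin k hθq).iterate n hx)).trans ?_
    gcongr

theorem tendsto_iterate_pottsBethe (k : ℕ) (hθq : ‖θ - 1‖ < ‖(q : ℚ_[p])‖) {x : ℚ_[p]}
    (hx : x ∈ basin p q) :
    Tendsto (fun n => (pottsBethe p q k θ)^[n] x) atTop (𝓝 1) := by
  have hq : 0 < ‖(q : ℚ_[p])‖ := (norm_nonneg _).trans_lt hθq
  have hc : ‖θ - 1‖ / ‖(q : ℚ_[p])‖ < 1 := (div_lt_one hq).mpr hθq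
  rw [tendsto_iff_norm_sub_tendsto_zero]
  refine squeeze_zero (fun _ => norm_nonneg _) (norm_iterate_pottsBethe_sub_one_le k hθq hx) ?_
  simpa using (tendsto_pow_atTop_nhds_zero_of_lt_one (by positivity) hc).mul_const ‖x - 1‖

theorem pole_notMem_basin (hθq : ‖θ - 1‖ < ‖(q : ℚ_[p])‖) : 2 - q - θ ∉ basin p q := by
  rwa [mem_basin, show (2 - q - θ : ℚ_[p]) - 1 + q = -(θ - 1) by ring, norm_neg, not_le]

end PottsBethe

theorem stmt6_general (p : ℕ) [Fact p.Prime] (q k : ℕ)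
    (θ : ℚ_[p]) (hθq : ‖θ - 1‖ < ‖(q : ℚ_[p])‖)
    (x : ℚ_[p]) (hx : ‖x - 1 + (q : ℚ_[p])‖ ≥ ‖(q : ℚ_[p])‖) :
    (∀ n : ℕ, (pottsBethe p q k θ)^[n] x ≠ 2 - (q : ℚ_[p]) - θ) ∧
    Filter.Tendsto (fun n => (pottsBethe p q k θ)^[n] x) Filter.atTop (nhds 1) := by
  open PottsBethe in
  refine ⟨fun n hpole => pole_notMem_basin hθq ?_, tendsto_iterate_pottsBethe k hθq hx⟩
  exact hpole ▸ (mapsTo_pottsBethe_basin k hθq).iterate n hx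

theorem stmt6 (p : ℕ) [Fact p.Prime] (hp : 3 ≤ p) (q k : ℕ) (hq : 1 ≤ q) (hk : 1 ≤ k)
    (θ : ℚ_[p]) (hθq : ‖θ - 1‖ < ‖(q : ℚ_[p])‖) (hqk : ‖(q : ℚ_[p])‖ < ‖(k : ℚ_[p])‖)
    (x : ℚ_[p]) (hx : ‖x - 1 + (q : ℚ_[p])‖ ≥ ‖(q : ℚ_[p])‖) :
    (∀ n : ℕ, (pottsBethe p q k θ)^[n] x ≠ 2 - (q : ℚ_[p]) - θ) ∧
    Filter.Tendsto (fun n => (pottsBethe p q k θ)^[n] x) Filter.atTop (nhds 1) :=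
  stmt6_general p q k θ hθq x hx
end

section
/- Let p ≥ 3 be a prime, let q, k ≥ 1 be natural numbers and θ ∈ ℚ_p with |q|_p < |k|_p, |q|_p < 1, and |θ − 1|_p < |q|_p². Then the polynomial F(x) = x^k − 1 + q + (θ − 1)·∑_{j=1}^{k−1} x^{k−j} has exactly one root in 𝓔_p. -/
/-!
On `𝓔_p = {x : ‖x - 1‖ < 1}` the `k`-th power map scales distances exactly by `‖k‖`
(for `p` odd: the map `z ↦ z ^ p` contracts `‖z - 1‖` by `p⁻¹` and exponents prime to `p` act
isometrically), and by Hensel's lemma it maps `𝓔_p` onto the ball of radius `‖k‖` around `1`.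
The equation `F(x) = 0` reads `x ^ k = g(x)` with `g(x) = 1 - q - (θ - 1) ∑ x ^ (k - j)`, where
`g` maps `𝓔_p` into that ball (as `‖q‖ < ‖k‖`) and is `‖θ - 1‖`-Lipschitz there. Since
`‖θ - 1‖ < ‖q‖ ^ 2 ≤ ‖q‖ < ‖k‖`, taking `k`-th roots of `g` is a contraction of the complete space
`𝓔_p`, whose unique fixed point is the root of `F`.
-/

open Metric Set
open scoped NNReal

theorem existsUnique_mem_eq_of_lipschitzOnWith {X Y : Type*} [MetricSpace X] [MetricSpace Y]
    {s : Set X} (hs : IsComplete s) (hne : s.Nonempty) {f g : X → Y} {K L : ℝ≥0} (hLK : L < K)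
    (hf : ∀ x ∈ s, ∀ y ∈ s, K * dist x y ≤ dist (f x) (f y)) (hg : LipschitzOnWith L g s)
    (hgf : MapsTo g s (f '' s)) :
    ∃! x, x ∈ s ∧ f x = g x := by
  have hK : (0 : ℝ) < K := (L.2.trans_lt hLK : (0 : ℝ≥0) < K)
  have hLK' : (L : ℝ) < K := hLK
  have : CompleteSpace s := hs.completeSpace_coe
  choose G hGs hfG using fun x (hx : x ∈ s) ↦ hgf hx
  -- `T = f⁻¹ ∘ g` on `s`, a contraction with constant `L / K`
  let T : s → s := fun x ↦ ⟨G x x.2, hGs x x.2⟩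
  have hT : ContractingWith (L / K) T := by
    refine ⟨(div_lt_one (L.2.trans_lt hLK)).2 hLK, LipschitzWith.of_dist_le_mul fun x y ↦ ?_⟩
    rw [NNReal.coe_div, div_mul_eq_mul_div, le_div_iff₀ hK, mul_comm]
    calc (K : ℝ) * dist (T x) (T y) ≤ dist (f (G x x.2)) (f (G y y.2)) :=
          hf _ (hGs x x.2) _ (hGs y y.2)
      _ = dist (g x) (g y) := by rw [hfG, hfG]
      _ ≤ L * dist x y := hg.dist_le_mul _ x.2 _ y.2
  obtain ⟨x₀, hx₀⟩ := hne
  obtain ⟨x, hx, -⟩ := hT.exists_fixedPoint ⟨x₀, hx₀⟩ (edist_ne_top _ _)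
  have hfx : f x = g x := by
    simpa [show G x x.2 = x from congrArg Subtype.val hx] using hfG x x.2
  refine ⟨x, ⟨x.2, hfx⟩, fun y ⟨hys, hfy⟩ ↦ dist_le_zero.1 ?_⟩
  have hdist := hf y hys x x.2
  rw [hfy, hfx] at hdist
  nlinarith [hg.dist_le_mul y hys x x.2, dist_nonneg (x := y) (y := x)]

theorem Nat.induction_on_prime_mul {p : ℕ} (hp : p ≠ 1) {P : ℕ → Prop} (h0 : P 0)
    (hcoprime : ∀ n, ¬p ∣ n → P n) (hmul : ∀ n, P n → P (p * n)) (n : ℕ) : P n := by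
  rcases eq_or_ne n 0 with rfl | hn
  · exact h0
  obtain ⟨e, m, hm, rfl⟩ := Nat.exists_eq_pow_mul_and_not_dvd hn p hp
  induction e with
  | zero => simpa using hcoprime m hm
  | succ e ih => simpa [pow_succ', mul_assoc] using hmul _ (ih (by simp_all))

namespace IsUltrametricDist

theorem norm_sub_lt_of_lt_of_lt {G : Type*} [SeminormedAddGroup G] [IsUltrametricDist G]
    {x y z : G} {r : ℝ} (hxy : ‖x - y‖ < r) (hyz : ‖y - z‖ < r) : ‖x - z‖ < r := by
  rw [← sub_add_sub_cancel x y z]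
  exact (norm_add_le_max _ _).trans_lt (max_lt hxy hyz)

variable {K : Type*} [NormedField K] [IsUltrametricDist K]

theorem norm_pow_sub_pow_le {x y : K} (hx : ‖x‖ ≤ 1) (hy : ‖y‖ ≤ 1) (n : ℕ) :
    ‖x ^ n - y ^ n‖ ≤ ‖x - y‖ := by
  rw [← geom_sum₂_mul, norm_mul]
  refine mul_le_of_le_one_left (norm_nonneg _) <|
    norm_sum_le_of_forall_le_of_nonneg zero_le_one fun i _ ↦ ?_
  rw [norm_mul, norm_pow, norm_pow]
  exact mul_le_one₀ (pow_le_one₀ (norm_nonneg _) hx) (by positivity) (pow_le_one₀ (norm_nonneg _) hy)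

theorem norm_sum_pow_le_one {ι : Type*} {x : K} (hx : ‖x‖ ≤ 1) (s : Finset ι) (e : ι → ℕ) :
    ‖∑ i ∈ s, x ^ e i‖ ≤ 1 :=
  norm_sum_le_of_forall_le_of_nonneg zero_le_one fun i _ ↦
    (norm_pow x (e i)).trans_le (pow_le_one₀ (norm_nonneg x) hx)

theorem norm_sum_pow_sub_sum_pow_le {ι : Type*} {x y : K} (hx : ‖x‖ ≤ 1) (hy : ‖y‖ ≤ 1)
    (s : Finset ι) (e : ι → ℕ) : ‖∑ i ∈ s, x ^ e i - ∑ i ∈ s, y ^ e i‖ ≤ ‖x - y‖ := by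
  rw [← Finset.sum_sub_distrib]
  exact norm_sum_le_of_forall_le_of_nonneg (norm_nonneg _)
    fun i _ ↦ norm_pow_sub_pow_le hx hy (e i)

end IsUltrametricDist

namespace Padic

variable {p : ℕ} [hp : Fact p.Prime]

theorem norm_lt_one_iff_norm_le_inv {x : ℚ_[p]} : ‖x‖ < 1 ↔ ‖x‖ ≤ (p : ℝ)⁻¹ := by
  simpa using norm_lt_pow_iff_norm_le_pow_sub_one x 0

theorem norm_eq_one_of_norm_sub_one_lt_one {z : ℚ_[p]} (hz : ‖z - 1‖ < 1) : ‖z‖ = 1 := by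
  simpa using norm_eq_of_norm_sub_lt_right (z1 := z) (z2 := 1) (by simpa using hz)

theorem norm_natCast_le_inv_of_dvd {n : ℕ} (hn : p ∣ n) : ‖(n : ℚ_[p])‖ ≤ (p : ℝ)⁻¹ :=
  norm_lt_one_iff_norm_le_inv.1 (norm_natCast_lt_one_iff.2 hn)

theorem norm_natCast_eq_one_of_not_dvd {n : ℕ} (hn : ¬p ∣ n) : ‖(n : ℚ_[p])‖ = 1 :=
  norm_natCast_eq_one_iff.2 ((Nat.Prime.coprime_iff_not_dvd hp.out).2 hn)

theorem norm_one_add_pow_prime_sub_le (hp3 : 3 ≤ p) {t : ℚ_[p]} (ht : ‖t‖ < 1) :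
    ‖(1 + t) ^ p - (1 + p * t)‖ ≤ (p : ℝ)⁻¹ * ‖t‖ ^ 2 := by
  have hsplit : (1 + t) ^ p - (1 + p * t) = ∑ j ∈ Finset.Ico 2 (p + 1), t ^ j * (p.choose j) := by
    rw [add_comm, add_pow, Finset.range_eq_Ico, Finset.sum_eq_sum_Ico_succ_bot (by omega),
      Finset.sum_eq_sum_Ico_succ_bot (by omega)]
    simp only [one_pow, mul_one, pow_zero, Nat.choose_zero_right, Nat.cast_one]
    rw [pow_one, Nat.choose_one_right]
    ring
  rw [hsplit]
  refine IsUltrametricDist.norm_sum_le_of_forall_le_of_nonneg (by positivity) fun j hj ↦ ?_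
  obtain ⟨hj2, hjp⟩ := Finset.mem_Ico.1 hj
  rw [norm_mul, norm_pow]
  rcases (Nat.lt_succ_iff.1 hjp).lt_or_eq with hjp | hj_eq
  · rw [mul_comm]
    exact mul_le_mul (norm_natCast_le_inv_of_dvd (hp.out.dvd_choose_self (by omega) hjp))
      (pow_le_pow_of_le_one (norm_nonneg t) ht.le hj2) (by positivity) (by positivity)
  · rw [hj_eq, Nat.choose_self, Nat.cast_one, norm_one, mul_one]
    calc ‖t‖ ^ p ≤ ‖t‖ ^ 3 := pow_le_pow_of_le_one (norm_nonneg t) ht.le hp3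
      _ = ‖t‖ * ‖t‖ ^ 2 := by ring
      _ ≤ (p : ℝ)⁻¹ * ‖t‖ ^ 2 := by gcongr; exact norm_lt_one_iff_norm_le_inv.1 ht

theorem norm_pow_prime_sub_one (hp3 : 3 ≤ p) {z : ℚ_[p]} (hz : ‖z - 1‖ < 1) :
    ‖z ^ p - 1‖ = (p : ℝ)⁻¹ * ‖z - 1‖ := by
  rcases eq_or_ne z 1 with rfl | hz1
  · simp
  have hpos : 0 < ‖z - 1‖ := norm_pos_iff.2 (sub_ne_zero.2 hz1)
  have hlt : ‖(1 + (z - 1)) ^ p - (1 + p * (z - 1))‖ < ‖(p : ℚ_[p]) * (z - 1)‖ := by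
    rw [norm_mul, norm_p]
    calc _ ≤ (p : ℝ)⁻¹ * ‖z - 1‖ ^ 2 := norm_one_add_pow_prime_sub_le hp3 hz
      _ < (p : ℝ)⁻¹ * ‖z - 1‖ := by gcongr; nlinarith
  have hsplit : z ^ p - 1 = ((1 + (z - 1)) ^ p - (1 + p * (z - 1))) + p * (z - 1) := by ring
  rw [hsplit, IsUltrametricDist.norm_add_eq_max_of_norm_ne_norm hlt.ne, max_eq_right hlt.le,
    norm_mul, norm_p]

theorem norm_pow_sub_one_of_not_dvd {n : ℕ} (hn : ¬p ∣ n) {z : ℚ_[p]} (hz : ‖z - 1‖ < 1) :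
    ‖z ^ n - 1‖ = ‖z - 1‖ := by
  have hn1 := norm_natCast_eq_one_of_not_dvd hn
  have hsmall : ‖∑ i ∈ Finset.range n, (z ^ i - 1)‖ < ‖(n : ℚ_[p])‖ := by
    refine hn1 ▸ lt_of_le_of_lt (IsUltrametricDist.norm_sum_le_of_forall_le_of_nonneg
      (norm_nonneg _) fun i _ ↦ ?_) hz
    simpa using IsUltrametricDist.norm_pow_sub_pow_le (norm_eq_one_of_norm_sub_one_lt_one hz).le
      norm_one.le i
  have hgeom : ∑ i ∈ Finset.range n, z ^ i = n + ∑ i ∈ Finset.range n, (z ^ i - 1) := by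
    simp [Finset.sum_sub_distrib]
  rw [← geom_sum_mul, norm_mul, hgeom,
    IsUltrametricDist.norm_add_eq_max_of_norm_ne_norm hsmall.ne', max_eq_left hsmall.le, hn1,
    one_mul]

theorem norm_pow_sub_one (hp3 : 3 ≤ p) (n : ℕ) {z : ℚ_[p]} (hz : ‖z - 1‖ < 1) :
    ‖z ^ n - 1‖ = ‖(n : ℚ_[p])‖ * ‖z - 1‖ := by
  induction n using Nat.induction_on_prime_mul hp.out.ne_one generalizing z with
  | h0 => simp
  | hcoprime n hn =>
    rw [norm_pow_sub_one_of_not_dvd hn hz, norm_natCast_eq_one_of_not_dvd hn, one_mul]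
  | hmul n ih =>
    have hzp : ‖z ^ p - 1‖ < 1 := by
      rw [norm_pow_prime_sub_one hp3 hz]
      exact lt_of_le_of_lt (mul_le_of_le_one_left (norm_nonneg _)
        (inv_le_one_of_one_le₀ (by exact_mod_cast hp.out.one_le))) hz
    rw [pow_mul, ih hzp, norm_pow_prime_sub_one hp3 hz, Nat.cast_mul, norm_mul, norm_p]
    ring

theorem norm_pow_sub_pow (hp3 : 3 ≤ p) (n : ℕ) {x y : ℚ_[p]} (hx : ‖x - 1‖ < 1)
    (hy : ‖y - 1‖ < 1) : ‖x ^ n - y ^ n‖ = ‖(n : ℚ_[p])‖ * ‖x - y‖ := by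
  have hy1 : ‖y‖ = 1 := norm_eq_one_of_norm_sub_one_lt_one hy
  have hy0 : y ≠ 0 := norm_ne_zero_iff.1 (by simp [hy1])
  have hxy : ‖x / y - 1‖ = ‖x - y‖ := by rw [div_sub_one hy0, norm_div, hy1, div_one]
  have hxy1 : ‖x - y‖ < 1 :=
    IsUltrametricDist.norm_sub_lt_of_lt_of_lt hx (by rwa [norm_sub_rev])
  have hfactor : x ^ n - y ^ n = ((x / y) ^ n - 1) * y ^ n := by
    rw [div_pow, sub_mul, div_mul_cancel₀ _ (pow_ne_zero _ hy0), one_mul]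
  rw [hfactor, norm_mul, norm_pow, hy1, one_pow, mul_one, norm_pow_sub_one hp3 n (hxy ▸ hxy1), hxy]

theorem exists_pow_eq_of_norm_pow_sub_lt {n : ℕ} {a c : ℚ_[p]} (ha : ‖a‖ = 1)
    (hac : ‖a ^ n - c‖ < ‖(n : ℚ_[p])‖ ^ 2) :
    ∃ z : ℚ_[p], ‖z - a‖ < ‖(n : ℚ_[p])‖ ∧ z ^ n = c := by
  have hc : ‖c‖ ≤ 1 := by
    rw [show c = a ^ n + -(a ^ n - c) by ring]
    refine (IsUltrametricDist.norm_add_le_max _ _).trans (max_le (by simp [ha]) ?_)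
    rw [norm_neg]
    exact hac.le.trans (pow_le_one₀ (norm_nonneg _) (IsUltrametricDist.norm_natCast_le_one _ n))
  let c' : ℤ_[p] := ⟨c, hc⟩
  let a' : ℤ_[p] := ⟨a, ha.le⟩
  let F : Polynomial ℤ_[p] := Polynomial.X ^ n - Polynomial.C c'
  have hF : ∀ z : ℤ_[p], (F.aeval z : ℚ_[p]) = (z : ℚ_[p]) ^ n - c := by
    intro z
    simp only [F, map_sub, map_pow, Polynomial.aeval_X, Polynomial.aeval_C,
      Algebra.algebraMap_self, RingHom.id_apply, PadicInt.coe_sub, PadicInt.coe_pow]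
    rfl
  have hF' : ‖F.derivative.aeval a'‖ = ‖(n : ℚ_[p])‖ := by
    have ha' : ‖a'‖ = 1 := ha
    rw [← PadicInt.coe_natCast, PadicInt.padic_norm_e_of_padicInt]
    simp [F, Polynomial.derivative_X_pow, ha']
  obtain ⟨z, hz, hza, -⟩ := hensels_lemma (F := F) (a := a') (by
    rw [hF', PadicInt.norm_def, hF]
    exact hac)
  refine ⟨z, by rwa [hF', PadicInt.norm_def] at hza, ?_⟩
  rw [← sub_eq_zero, ← hF, hz, PadicInt.coe_zero]

theorem exists_pow_eq_of_not_dvd {n : ℕ} (hn : ¬p ∣ n) {c : ℚ_[p]} (hc : ‖c - 1‖ < 1) :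
    ∃ z : ℚ_[p], ‖z - 1‖ < 1 ∧ z ^ n = c := by
  have hn1 := norm_natCast_eq_one_of_not_dvd hn
  obtain ⟨z, hz, hzc⟩ := exists_pow_eq_of_norm_pow_sub_lt (a := 1) (c := c) (n := n) norm_one
    (by rwa [one_pow, hn1, one_pow, norm_sub_rev])
  exact ⟨z, hn1 ▸ hz, hzc⟩

theorem exists_pow_prime_eq (hp3 : 3 ≤ p) {c : ℚ_[p]} (hc : ‖c - 1‖ < (p : ℝ)⁻¹) :
    ∃ z : ℚ_[p], ‖z - 1‖ < 1 ∧ z ^ p = c := by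
  have hp0 : (p : ℚ_[p]) ≠ 0 := Nat.cast_ne_zero.2 hp.out.ne_zero
  have hpR : (0 : ℝ) < p := by exact_mod_cast hp.out.pos
  set s := (c - 1) / p with hs
  have hs1 : ‖s‖ < 1 := by
    rw [hs, norm_div, norm_p, div_inv_eq_mul]
    calc ‖c - 1‖ * p < (p : ℝ)⁻¹ * p := by gcongr
      _ = 1 := inv_mul_cancel₀ hpR.ne'
  have hcs : c = 1 + p * s := by rw [hs, mul_div_cancel₀ _ hp0]; ring
  -- Hensel's lemma applies at `1 + s`, which is a root up to the quadratic binomial terms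
  have hlt : ‖(1 + s) ^ p - c‖ < ‖(p : ℚ_[p])‖ ^ 2 := by
    have hs' := norm_lt_one_iff_norm_le_inv.1 hs1
    rw [hcs, norm_p]
    calc _ ≤ (p : ℝ)⁻¹ * ‖s‖ ^ 2 := norm_one_add_pow_prime_sub_le hp3 hs1
      _ ≤ (p : ℝ)⁻¹ * (p : ℝ)⁻¹ ^ 2 := by gcongr
      _ < 1 * (p : ℝ)⁻¹ ^ 2 := by
        gcongr; exact inv_lt_one_of_one_lt₀ (by exact_mod_cast hp.out.one_lt)
      _ = (p : ℝ)⁻¹ ^ 2 := one_mul _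
  obtain ⟨z, hz, hzc⟩ := exists_pow_eq_of_norm_pow_sub_lt
    (norm_eq_one_of_norm_sub_one_lt_one (by simpa using hs1)) hlt
  refine ⟨z, IsUltrametricDist.norm_sub_lt_of_lt_of_lt (hz.trans_le ?_) (by simpa using hs1), hzc⟩
  exact IsUltrametricDist.norm_natCast_le_one _ p

theorem exists_pow_eq (hp3 : 3 ≤ p) (n : ℕ) {c : ℚ_[p]} (hc : ‖c - 1‖ < ‖(n : ℚ_[p])‖) :
    ∃ z : ℚ_[p], ‖z - 1‖ < 1 ∧ z ^ n = c := by
  induction n using Nat.induction_on_prime_mul hp.out.ne_one generalizing c with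
  | h0 => exact absurd hc (by simp)
  | hcoprime n hn =>
    rw [norm_natCast_eq_one_of_not_dvd hn] at hc
    exact exists_pow_eq_of_not_dvd hn hc
  | hmul n ih =>
    rw [Nat.cast_mul, norm_mul, norm_p] at hc
    obtain ⟨d, hd, rfl⟩ := exists_pow_prime_eq hp3 (hc.trans_le (mul_le_of_le_one_right
      (by positivity) (IsUltrametricDist.norm_natCast_le_one _ n)))
    rw [norm_pow_prime_sub_one hp3 hd] at hc
    obtain ⟨z, hz, rfl⟩ := ih (lt_of_mul_lt_mul_left hc (by positivity))
    exact ⟨z, hz, by rw [← pow_mul, mul_comm]⟩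

theorem existsUnique_pow_eq_of_lipschitzOnWith (hp3 : 3 ≤ p) (k : ℕ) {g : ℚ_[p] → ℚ_[p]}
    {L : ℝ≥0} (hL : L < ‖(k : ℚ_[p])‖₊) (hg : LipschitzOnWith L g (ball 1 1))
    (hgk : MapsTo g (ball 1 1) (ball 1 ‖(k : ℚ_[p])‖)) :
    ∃! x, x ∈ ball 1 1 ∧ x ^ k = g x := by
  refine existsUnique_mem_eq_of_lipschitzOnWith (IsUltrametricDist.isClosed_ball 1 1).isComplete
    ⟨1, mem_ball_self one_pos⟩ hL (fun x hx y hy ↦ ?_) hg fun x hx ↦ ?_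
  · rw [mem_ball_iff_norm] at hx hy
    rw [dist_eq_norm, dist_eq_norm, norm_pow_sub_pow hp3 k hx hy, coe_nnnorm]
  · obtain ⟨y, hy, hyx⟩ := exists_pow_eq hp3 k (mem_ball_iff_norm.1 (hgk hx))
    exact ⟨y, mem_ball_iff_norm.2 hy, hyx⟩

end Padic

theorem stmt18_general (p : ℕ) [Fact p.Prime] (hp : 3 ≤ p) (q k : ℕ)
    (θ : ℚ_[p]) (hqk : ‖(q : ℚ_[p])‖ < ‖(k : ℚ_[p])‖)
    (hθq : ‖θ - 1‖ < ‖(q : ℚ_[p])‖ ^ 2) :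
    ∃! x : ℚ_[p], ‖x - 1‖ < 1 ∧
      x ^ k - 1 + (q : ℚ_[p]) + (θ - 1) * ∑ j ∈ Finset.Icc 1 (k - 1), x ^ (k - j) = 0 := by
  set S : ℚ_[p] → ℚ_[p] := fun x ↦ ∑ j ∈ Finset.Icc 1 (k - 1), x ^ (k - j)
  have hnorm_le {x : ℚ_[p]} (hx : x ∈ ball 1 1) : ‖x‖ ≤ 1 :=
    (Padic.norm_eq_one_of_norm_sub_one_lt_one (mem_ball_iff_norm.1 hx)).le
  have hθk : ‖θ - 1‖ < ‖(k : ℚ_[p])‖ := hθq.trans_le (pow_le_of_le_one (norm_nonneg _)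
    (IsUltrametricDist.norm_natCast_le_one _ q) two_ne_zero) |>.trans hqk
  have hlip : LipschitzOnWith ‖θ - 1‖₊ (fun x ↦ 1 - q - (θ - 1) * S x) (ball 1 1) :=
    LipschitzOnWith.of_dist_le_mul fun x hx y hy ↦ by
      rw [dist_eq_norm, dist_eq_norm, coe_nnnorm, norm_sub_rev x y,
        show 1 - q - (θ - 1) * S x - (1 - q - (θ - 1) * S y) = (θ - 1) * (S y - S x) by ring,
        norm_mul]
      exact mul_le_mul_of_nonneg_left (IsUltrametricDist.norm_sum_pow_sub_sum_pow_le
        (hnorm_le hy) (hnorm_le hx) _ _) (norm_nonneg _)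
  have hmaps : MapsTo (fun x ↦ 1 - q - (θ - 1) * S x) (ball 1 1) (ball 1 ‖(k : ℚ_[p])‖) :=
    fun x hx ↦ by
      rw [mem_ball_iff_norm, show 1 - q - (θ - 1) * S x - 1 = -(q + (θ - 1) * S x) by ring,
        norm_neg]
      refine (IsUltrametricDist.norm_add_le_max _ _).trans_lt (max_lt hqk ?_)
      rw [norm_mul]
      exact (mul_le_of_le_one_right (norm_nonneg _)
        (IsUltrametricDist.norm_sum_pow_le_one (hnorm_le hx) _ _)).trans_lt hθk
  refine (existsUnique_congr fun x ↦ ?_).1 (Padic.existsUnique_pow_eq_of_lipschitzOnWith hp k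
    hθk hlip hmaps)
  rw [mem_ball_iff_norm]
  exact and_congr_right fun _ ↦ ⟨fun h ↦ by linear_combination h, fun h ↦ by linear_combination h⟩

theorem stmt18 (p : ℕ) [Fact p.Prime] (hp : 3 ≤ p) (q k : ℕ) (hq : 1 ≤ q) (hk : 1 ≤ k)
    (θ : ℚ_[p]) (hqk : ‖(q : ℚ_[p])‖ < ‖(k : ℚ_[p])‖) (hq1 : ‖(q : ℚ_[p])‖ < 1)
    (hθq : ‖θ - 1‖ < ‖(q : ℚ_[p])‖ ^ 2) :
    ∃! x : ℚ_[p], ‖x - 1‖ < 1 ∧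
      x ^ k - 1 + (q : ℚ_[p]) + (θ - 1) * ∑ j ∈ Finset.Icc 1 (k - 1), x ^ (k - j) = 0 :=
  stmt18_general p hp q k θ hqk hθq
end
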